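/- arXiv:1103.6006 — 3 statements merged into one kernel-verified Lean document; each statement's English description precedes it below -/
import Mathlib

section
/- Under the hypotheses: x_{j-1} < x_j, x* ∈ [x_{j-1}, x_j], N ≥ 1, μ > 0, r > 0, z_{j-1} - f(x*) ≤ K (x* - x_{j-1})^(1/N), z_j - f(x*) ≤ K (x_j - x*)^(1/N) with K defined as K = max{(z_{j-1} - f(x*))(x* - x_{j-1})^(-1/N), (z_j - f(x*))(x_j - x*)^(-1/N)}, M = |z_{j-1} - z_j| (x_j - x_{j-1})^(-1/N), and rμ ≥ 2^(1-1/N) K + (4^(1-1/N) K² - M²)^(1/2) with 4^(1-1/N) K² ≥ M²: the characteristic R = rμ (x_j - x_{j-1})^(1/N) + (z_j - z_{j-1})² / (rμ (x_j - x_{j-1})^(1/N)) - 2(z_{j-1} + z_j) satisfies R ≥ -4 f(x*). -/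
/-!
Write `p = 1/N`, `d = (x_j - x_{j-1})^p`, `s = rμ` and `c = 2^(1-p) K`. Concavity of `t ↦ t^p`
turns the two Hölder bounds at `x*` into `z_{j-1} + z_j - 2 f(x*) ≤ c d`, and by definition of `M`
we have `(z_j - z_{j-1})² = M² d²`. Hence `R + 4 f(x*) ≥ d (s² - 2cs + M²) / s`, and condition (28)
makes this quadratic in `s` nonnegative: either its discriminant is negative or `s` lies beyond
its larger root.
-/

open Real

theorem rpow_add_rpow_le_two_rpow_mul_add_rpow {p u v : ℝ} (hp₀ : 0 ≤ p) (hp₁ : p ≤ 1)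
    (hu : 0 ≤ u) (hv : 0 ≤ v) :
    u ^ p + v ^ p ≤ 2 ^ (1 - p) * (u + v) ^ p := by
  have hmid : 1 / 2 * u ^ p + 1 / 2 * v ^ p ≤ (1 / 2 * u + 1 / 2 * v) ^ p :=
    (concaveOn_rpow hp₀ hp₁).2 hu hv (by norm_num) (by norm_num) (by norm_num)
  have hmean : (1 / 2 * u + 1 / 2 * v) ^ p = (u + v) ^ p / 2 ^ p := by
    rw [← mul_add, one_div_mul_eq_div, div_rpow (by positivity) (by norm_num)]
  have htwo : (2 : ℝ) ^ (1 - p) = 2 / 2 ^ p := by rw [rpow_sub two_pos, rpow_one]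
  rw [hmean] at hmid
  rw [htwo, div_mul_eq_mul_div, mul_div_assoc]
  linarith

theorem sq_sub_two_mul_add_sq_nonneg_of_add_sqrt_le {c m s : ℝ} (h : c + √(c ^ 2 - m ^ 2) ≤ s) :
    0 ≤ s ^ 2 - 2 * c * s + m ^ 2 := by
  have hsqrt : c ^ 2 - m ^ 2 ≤ √(c ^ 2 - m ^ 2) ^ 2 := by rw [sq_sqrt']; exact le_max_left _ _
  have hroot : √(c ^ 2 - m ^ 2) ^ 2 ≤ (s - c) ^ 2 :=
    pow_le_pow_left₀ (sqrt_nonneg _) (by linarith) 2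
  nlinarith

theorem neg_four_mul_le_characteristic {s d c m f z₁ z₂ : ℝ} (hs : 0 < s) (hd : 0 < d)
    (hz : z₁ + z₂ - 2 * f ≤ c * d) (hm : |z₁ - z₂| = m * d)
    (hq : 0 ≤ s ^ 2 - 2 * c * s + m ^ 2) :
    -4 * f ≤ s * d + (z₂ - z₁) ^ 2 / (s * d) - 2 * (z₁ + z₂) := by
  have hsq : (z₂ - z₁) ^ 2 = (m * d) ^ 2 := by rw [← hm, sq_abs]; ring
  have hexpand : s * d + (z₂ - z₁) ^ 2 / (s * d) - 2 * (c * d)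
      = d * (s ^ 2 - 2 * c * s + m ^ 2) / s := by
    rw [hsq]; field_simp; ring
  have hnonneg : 0 ≤ d * (s ^ 2 - 2 * c * s + m ^ 2) / s :=
    div_nonneg (mul_nonneg hd.le hq) hs.le
  linarith

theorem stmt5_general (N r μ K M R fstar zjm zj xjm xj xs : ℝ)
    (hN : 1 ≤ N) (hμ : 0 < μ) (hr : 0 < r)
    (hx : xjm < xj) (hxs1 : xjm ≤ xs) (hxs2 : xs ≤ xj)
    (hK : 0 ≤ K)
    (h1 : zjm - fstar ≤ K * (xs - xjm) ^ (1/N))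
    (h2 : zj - fstar ≤ K * (xj - xs) ^ (1/N))
    (hM : M = |zjm - zj| * (xj - xjm) ^ (-(1/N)))
    (h28 : 2 ^ (1 - 1/N) * K + Real.sqrt (4 ^ (1 - 1/N) * K ^ 2 - M ^ 2) ≤ r * μ)
    (hR : R = r * μ * (xj - xjm) ^ (1/N) + (zj - zjm) ^ 2 / (r * μ * (xj - xjm) ^ (1/N))
      - 2 * (zjm + zj)) :
    R ≥ -4 * fstar := by
  have hp₀ : 0 ≤ 1 / N := by positivity
  have hp₁ : 1 / N ≤ 1 := div_le_one_of_le₀ hN (by linarith)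
  have hd : 0 < (xj - xjm) ^ (1 / N) := rpow_pos_of_pos (sub_pos.2 hx) _
  have hMd : |zjm - zj| = M * (xj - xjm) ^ (1 / N) := by
    rw [hM, rpow_neg (sub_pos.2 hx).le]; field_simp
  have hsum : zjm + zj - 2 * fstar ≤ 2 ^ (1 - 1 / N) * K * (xj - xjm) ^ (1 / N) := by
    have hmean := rpow_add_rpow_le_two_rpow_mul_add_rpow hp₀ hp₁
      (sub_nonneg.2 hxs1) (sub_nonneg.2 hxs2)
    rw [sub_add_sub_cancel'] at hmean
    linarith [mul_le_mul_of_nonneg_left hmean hK]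
  have hfour : (4 : ℝ) ^ (1 - 1 / N) * K ^ 2 = (2 ^ (1 - 1 / N) * K) ^ 2 := by
    rw [show (4 : ℝ) = 2 * 2 by norm_num, mul_rpow (by norm_num) (by norm_num)]; ring
  rw [hfour] at h28
  rw [hR, ge_iff_le]
  exact neg_four_mul_le_characteristic (mul_pos hr hμ) hd hsum hMd
    (sq_sub_two_mul_add_sq_nonneg_of_add_sqrt_le h28)

/-- the characteristic of an interval containing the global minimizer
is bounded below by -4 f(x*) whenever the reliability condition (28) holds. -/
theorem stmt5 (N r μ K M R fstar zjm zj xjm xj xs : ℝ)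
    (hN : 1 ≤ N) (hμ : 0 < μ) (hr : 0 < r)
    (hx : xjm < xj) (hxs1 : xjm ≤ xs) (hxs2 : xs ≤ xj)
    (hK : 0 ≤ K)
    (h1 : zjm - fstar ≤ K * (xs - xjm) ^ (1/N))
    (h2 : zj - fstar ≤ K * (xj - xs) ^ (1/N))
    (hM : M = |zjm - zj| * (xj - xjm) ^ (-(1/N)))
    (hMK : M ^ 2 ≤ 4 ^ (1 - 1/N) * K ^ 2)
    (h28 : 2 ^ (1 - 1/N) * K + Real.sqrt (4 ^ (1 - 1/N) * K ^ 2 - M ^ 2) ≤ r * μ)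
    (hR : R = r * μ * (xj - xjm) ^ (1/N) + (zj - zjm) ^ 2 / (r * μ * (xj - xjm) ^ (1/N))
      - 2 * (zjm + zj)) :
    R ≥ -4 * fstar :=
  stmt5_general N r μ K M R fstar zjm zj xjm xj xs hN hμ hr hx hxs1 hxs2 hK h1 h2 hM h28 hR
end

section
/- Let f : [0,1] → ℝ satisfy the Hölder condition |f(x') - f(x'')| ≤ H |x' - x''|^(1/N), let x_{j-1} < x* < x_j, z_{j-1} = f(x_{j-1}), z_j = f(x_j), and suppose x* is a global minimizer of f. Then the quantities K_j = max{(z_{j-1} - f(x*))(x* - x_{j-1})^(-1/N), (z_j - f(x*))(x_j - x*)^(-1/N)} and M_j = |z_{j-1} - z_j| (x_j - x_{j-1})^(-1/N) satisfy 0 ≤ M_j ≤ H, 0 ≤ K_j ≤ H, and moreover M_j ≤ 2^(1-1/N) K_j. -/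
open scoped NNReal

lemma aux_nn (a b : ℝ≥0) {p : ℝ} (hp : 0 < p) (hp1 : p ≤ 1) :
    a ^ p + b ^ p ≤ 2 ^ (1 - p) * (a + b) ^ p := by
  have hq : 1 ≤ 1 / p := (one_le_div hp).mpr hp1
  have h := NNReal.rpow_add_le_mul_rpow_add_rpow (a ^ p) (b ^ p) hq
  have hap : (a ^ p) ^ (1 / p) = a := by
    rw [← NNReal.rpow_mul, mul_one_div, div_self hp.ne', NNReal.rpow_one]
  have hbp : (b ^ p) ^ (1 / p) = b := by
    rw [← NNReal.rpow_mul, mul_one_div, div_self hp.ne', NNReal.rpow_one]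
  rw [hap, hbp] at h
  have h2 := NNReal.rpow_le_rpow h hp.le
  rw [← NNReal.rpow_mul, one_div, inv_mul_cancel₀ hp.ne', NNReal.rpow_one,
    NNReal.mul_rpow, ← NNReal.rpow_mul] at h2
  have heq : (p⁻¹ - 1) * p = 1 - p := by field_simp
  rwa [heq] at h2

lemma aux_real (a b : ℝ) (ha : 0 ≤ a) (hb : 0 ≤ b) {p : ℝ} (hp : 0 < p) (hp1 : p ≤ 1) :
    a ^ p + b ^ p ≤ 2 ^ (1 - p) * (a + b) ^ p := by
  lift a to ℝ≥0 using ha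
  lift b to ℝ≥0 using hb
  have h := aux_nn a b hp hp1
  have := NNReal.coe_le_coe.mpr h
  push_cast [NNReal.coe_rpow] at this ⊢
  convert this using 2

/-- bounds on K_j and M_j: 0 ≤ M_j ≤ H, 0 ≤ K_j ≤ H, and
M_j ≤ 2^(1-1/N) K_j. -/
theorem stmt8 (N H : ℝ) (hN : 1 ≤ N) (hH : 0 < H)
    (f : ℝ → ℝ)
    (hf : ∀ u ∈ Set.Icc (0:ℝ) 1, ∀ v ∈ Set.Icc (0:ℝ) 1,
      |f u - f v| ≤ H * |u - v| ^ (1/N))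
    (xjm xs xj : ℝ)
    (hxjm : xjm ∈ Set.Icc (0:ℝ) 1) (hxs : xs ∈ Set.Icc (0:ℝ) 1)
    (hxj : xj ∈ Set.Icc (0:ℝ) 1)
    (hord1 : xjm < xs) (hord2 : xs < xj)
    (hmin : ∀ u ∈ Set.Icc (0:ℝ) 1, f xs ≤ f u)
    (K M : ℝ)
    (hK : K = max ((f xjm - f xs) * (xs - xjm) ^ (-(1/N)))
              ((f xj - f xs) * (xj - xs) ^ (-(1/N))))
    (hM : M = |f xjm - f xj| * (xj - xjm) ^ (-(1/N))) :
    0 ≤ M ∧ M ≤ H ∧ 0 ≤ K ∧ K ≤ H ∧ M ≤ 2 ^ (1 - 1/N) * K := by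
  have hNpos : (0:ℝ) < N := lt_of_lt_of_le one_pos hN
  set p : ℝ := 1/N with hp_def
  have hppos : 0 < p := by positivity
  have hp1 : p ≤ 1 := by
    rw [hp_def, div_le_one hNpos]; exact hN
  have ha : (0:ℝ) < xs - xjm := by linarith
  have hb : (0:ℝ) < xj - xs := by linarith
  have hc : (0:ℝ) < xj - xjm := by linarith
  have hap : (0:ℝ) < (xs - xjm) ^ p := Real.rpow_pos_of_pos ha p
  have hbp : (0:ℝ) < (xj - xs) ^ p := Real.rpow_pos_of_pos hb p
  have hcp : (0:ℝ) < (xj - xjm) ^ p := Real.rpow_pos_of_pos hc p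
  have hanegp : (xs - xjm) ^ (-p) = ((xs - xjm) ^ p)⁻¹ := Real.rpow_neg ha.le p
  have hbnegp : (xj - xs) ^ (-p) = ((xj - xs) ^ p)⁻¹ := Real.rpow_neg hb.le p
  have hcnegp : (xj - xjm) ^ (-p) = ((xj - xjm) ^ p)⁻¹ := Real.rpow_neg hc.le p
  -- Hölder bounds
  have hfa : |f xjm - f xs| ≤ H * (xs - xjm) ^ p := by
    have := hf xjm hxjm xs hxs
    rwa [abs_sub_comm xjm xs, abs_of_pos ha] at this
  have hfb : |f xj - f xs| ≤ H * (xj - xs) ^ p := by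
    have := hf xj hxj xs hxs
    rwa [abs_of_pos hb] at this
  have hfc : |f xjm - f xj| ≤ H * (xj - xjm) ^ p := by
    have := hf xjm hxjm xj hxj
    rwa [abs_sub_comm xjm xj, abs_of_pos hc] at this
  -- f xs is min
  have hmin1 : f xs ≤ f xjm := hmin xjm hxjm
  have hmin2 : f xs ≤ f xj := hmin xj hxj
  -- 0 ≤ M
  have hM0 : 0 ≤ M := by
    rw [hM]; positivity
  -- M ≤ H
  have hMH : M ≤ H := by
    rw [hM, hcnegp]
    calc |f xjm - f xj| * ((xj - xjm) ^ p)⁻¹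
        ≤ (H * (xj - xjm) ^ p) * ((xj - xjm) ^ p)⁻¹ := by
          apply mul_le_mul_of_nonneg_right hfc (by positivity)
      _ = H := by field_simp
  -- 0 ≤ K
  have hK0 : 0 ≤ K := by
    rw [hK]
    refine le_trans ?_ (le_max_left _ _)
    have : 0 ≤ f xjm - f xs := by linarith
    positivity
  -- K ≤ H
  have hKH : K ≤ H := by
    rw [hK]
    apply max_le
    · rw [hanegp]
      calc (f xjm - f xs) * ((xs - xjm) ^ p)⁻¹
          ≤ (H * (xs - xjm) ^ p) * ((xs - xjm) ^ p)⁻¹ := by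
            apply mul_le_mul_of_nonneg_right
              (le_trans (le_abs_self _) hfa) (by positivity)
        _ = H := by field_simp
    · rw [hbnegp]
      calc (f xj - f xs) * ((xj - xs) ^ p)⁻¹
          ≤ (H * (xj - xs) ^ p) * ((xj - xs) ^ p)⁻¹ := by
            apply mul_le_mul_of_nonneg_right
              (le_trans (le_abs_self _) hfb) (by positivity)
        _ = H := by field_simp
  refine ⟨hM0, hMH, hK0, hKH, ?_⟩
  -- key: f xjm - f xs ≤ K * a^p, f xj - f xs ≤ K * b^p
  have h1 : f xjm - f xs ≤ K * (xs - xjm) ^ p := by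
    have hle : (f xjm - f xs) * (xs - xjm) ^ (-p) ≤ K := hK ▸ le_max_left _ _
    rw [hanegp] at hle
    have := mul_le_mul_of_nonneg_right hle hap.le
    rwa [mul_assoc, inv_mul_cancel₀ hap.ne', mul_one] at this
  have h2 : f xj - f xs ≤ K * (xj - xs) ^ p := by
    have hle : (f xj - f xs) * (xj - xs) ^ (-p) ≤ K := hK ▸ le_max_right _ _
    rw [hbnegp] at hle
    have := mul_le_mul_of_nonneg_right hle hbp.le
    rwa [mul_assoc, inv_mul_cancel₀ hbp.ne', mul_one] at this
  have habs : |f xjm - f xj| ≤ (f xjm - f xs) + (f xj - f xs) := by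
    rw [abs_sub_le_iff]; constructor <;> linarith
  have hsum : (xs - xjm) ^ p + (xj - xs) ^ p ≤ 2 ^ (1 - p) * (xj - xjm) ^ p := by
    have := aux_real (xs - xjm) (xj - xs) ha.le hb.le hppos hp1
    have heq : xs - xjm + (xj - xs) = xj - xjm := by ring
    rwa [heq] at this
  have hchain : |f xjm - f xj| ≤ 2 ^ (1 - p) * K * (xj - xjm) ^ p := by
    calc |f xjm - f xj| ≤ (f xjm - f xs) + (f xj - f xs) := habs
      _ ≤ K * (xs - xjm) ^ p + K * (xj - xs) ^ p := add_le_add h1 h2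
      _ = K * ((xs - xjm) ^ p + (xj - xs) ^ p) := by ring
      _ ≤ K * (2 ^ (1 - p) * (xj - xjm) ^ p) := mul_le_mul_of_nonneg_left hsum hK0
      _ = 2 ^ (1 - p) * K * (xj - xjm) ^ p := by ring
  rw [hM, hcnegp]
  calc |f xjm - f xj| * ((xj - xjm) ^ p)⁻¹
      ≤ (2 ^ (1 - p) * K * (xj - xjm) ^ p) * ((xj - xjm) ^ p)⁻¹ :=
        mul_le_mul_of_nonneg_right hchain (by positivity)
    _ = 2 ^ (1 - p) * K := by field_simp
end

section
/- Let f : [0,1] → ℝ be continuous and let {x^q} be a sequence in [0,1] such that a point x̄ ∈ (0,1) is a limit point approached both by a subsequence from the left and by a subsequence from the right, f has finitely many local extrema, and f(x^q) ≥ f(x̄) for all q with {x^q} dense in no subinterval except near its limit points. If additionally f(x) ≥ f(x̄) for all x in some neighborhood of x̄ minus the set {x^q}, then x̄ is a local minimizer of f. -/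
/-- a two-sided limit point x̄ of trial points with f(x^q) ≥ f(x̄),
for a continuous f with finitely many local extrema, is a local minimizer. -/
theorem stmt11 (f : ℝ → ℝ) (hf : ContinuousOn f (Set.Icc 0 1))
    (xbar : ℝ) (hxbar : xbar ∈ Set.Ioo (0:ℝ) 1)
    (a b : ℕ → ℝ)
    (ha : ∀ k, a k ∈ Set.Icc (0:ℝ) 1 ∧ a k < xbar ∧ f xbar ≤ f (a k))
    (hb : ∀ k, b k ∈ Set.Icc (0:ℝ) 1 ∧ xbar < b k ∧ f xbar ≤ f (b k))
    (hamono : StrictMono a) (hbanti : StrictAnti b)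
    (hal : Filter.Tendsto a Filter.atTop (nhds xbar))
    (hbl : Filter.Tendsto b Filter.atTop (nhds xbar))
    (hext : {x | IsLocalExtrOn f (Set.Icc 0 1) x}.Finite) :
    IsLocalMinOn f (Set.Icc 0 1) xbar := by
  by_contra hmin
  have hfreq : ∃ᶠ x in nhdsWithin xbar (Set.Icc 0 1), f x < f xbar := by
    simpa [IsLocalMinOn, IsMinFilter, Filter.not_eventually, not_le] using hmin
  have key : ∀ k, ∃ c, c ∈ Set.Ioo (a k) (b k) ∧
      IsLocalExtrOn f (Set.Icc 0 1) c ∧ f c < f xbar := by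
    intro k
    have hIoo : Set.Ioo (a k) (b k) ∈ nhds xbar :=
      isOpen_Ioo.mem_nhds ⟨(ha k).2.1, (hb k).2.1⟩
    have hIoo' : Set.Ioo (a k) (b k) ∈ nhdsWithin xbar (Set.Icc 0 1) :=
      mem_nhdsWithin_of_mem_nhds hIoo
    obtain ⟨y, hy1, hy2⟩ :=
      (hfreq.and_eventually (Filter.eventually_of_mem hIoo' (fun x hx => hx))).exists
    have hsub : Set.Icc (a k) (b k) ⊆ Set.Icc (0:ℝ) 1 :=
      Set.Icc_subset_Icc (ha k).1.1 (hb k).1.2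
    obtain ⟨c, hcmem, hcmin⟩ :=
      isCompact_Icc.exists_isMinOn ⟨y, Set.Ioo_subset_Icc_self hy2⟩ (hf.mono hsub)
    have hfc : f c < f xbar := lt_of_le_of_lt (hcmin (Set.Ioo_subset_Icc_self hy2)) hy1
    have hca : a k < c := by
      rcases lt_or_eq_of_le hcmem.1 with h | h
      · exact h
      · exact absurd hfc (by rw [← h]; exact not_lt.2 (ha k).2.2)
    have hcb : c < b k := by
      rcases lt_or_eq_of_le hcmem.2 with h | h
      · exact h
      · exact absurd hfc (by rw [h]; exact not_lt.2 (hb k).2.2)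
    refine ⟨c, ⟨hca, hcb⟩, Or.inl ?_, hfc⟩
    have hIooc : Set.Ioo (a k) (b k) ∈ nhdsWithin c (Set.Icc (0:ℝ) 1) :=
      mem_nhdsWithin_of_mem_nhds (isOpen_Ioo.mem_nhds ⟨hca, hcb⟩)
    exact Filter.eventually_of_mem hIooc
      (fun x hx => hcmin (Set.Ioo_subset_Icc_self hx))
  choose c hc1 hc2 hc3 using key
  haveI : Finite {x | IsLocalExtrOn f (Set.Icc 0 1) x} := hext.to_subtype
  obtain ⟨y, hy⟩ := Finite.exists_infinite_fiber
    (fun k => (⟨c k, hc2 k⟩ : {x | IsLocalExtrOn f (Set.Icc 0 1) x}))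
  have hy' : {k | c k = y.1}.Infinite := by
    rw [Set.infinite_coe_iff] at hy
    refine hy.mono ?_
    intro k hk
    simpa [Subtype.ext_iff] using hk
  have hxy : xbar ≤ y.1 := by
    refine le_of_tendsto hal (Filter.eventually_atTop.2 ⟨0, fun k _ => ?_⟩)
    obtain ⟨m, hm, hmk⟩ := hy'.exists_gt k
    have : a k < a m := hamono hmk
    calc a k ≤ a m := le_of_lt this
    _ ≤ y.1 := by rw [← hm]; exact le_of_lt (hc1 m).1
  have hyx : y.1 ≤ xbar := by
    refine ge_of_tendsto hbl (Filter.eventually_atTop.2 ⟨0, fun k _ => ?_⟩)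
    obtain ⟨m, hm, hmk⟩ := hy'.exists_gt k
    calc y.1 ≤ b m := by rw [← hm]; exact le_of_lt (hc1 m).2
    _ ≤ b k := le_of_lt (hbanti hmk)
  have heq : y.1 = xbar := le_antisymm hyx hxy
  obtain ⟨m, hm, _⟩ := hy'.exists_gt 0
  have hlt := hc3 m
  rw [hm, heq] at hlt
  exact lt_irrefl _ hlt
end
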